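/- Let P be an m×m row-stochastic matrix that is irreducible and aperiodic, and let π be a stationary distribution of P. Suppose the eigenvalues λ_1, …, λ_m of P (the roots of its characteristic polynomial over ℂ) are all nonzero and pairwise distinct, with λ_1 = 1, and set ρ = max_{2 ≤ k ≤ m} |λ_k|. Then for all indices i, j and all n ≥ 1, |(P^n)_{ij} − π_j| ≤ Ψ · ρ^{n-1}, where Ψ = ∑_{k=2}^m ∏_{t≠k} (1 + |λ_t|) / |λ_k − λ_t|. -/

import Mathlib

open Finset Polynomial

/-- An `m × m` real matrix with nonnegative entries whose rows each sum to 1. -/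
def IsRowStochastic {m : ℕ} (P : Matrix (Fin m) (Fin m) ℝ) : Prop :=
  (∀ i j, 0 ≤ P i j) ∧ ∀ i, ∑ j, P i j = 1

/-- Irreducibility of a Markov transition matrix. -/
def IsIrreducibleMC {m : ℕ} (P : Matrix (Fin m) (Fin m) ℝ) : Prop :=
  ∀ i j, ∃ n : ℕ, 1 ≤ n ∧ 0 < (P ^ n) i j

/-- Aperiodicity of a Markov transition matrix: for each state `i`, the gcd of
`{n ≥ 1 : (P^n)_{ii} > 0}` is `1`, i.e. every common divisor of that set equals `1`. -/
def IsAperiodicMC {m : ℕ} (P : Matrix (Fin m) (Fin m) ℝ) : Prop :=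
  ∀ i, ∀ d : ℕ, (∀ n : ℕ, 1 ≤ n → 0 < (P ^ n) i i → d ∣ n) → d = 1

/-- A stationary distribution of `P`. -/
def IsStationaryDistMC {m : ℕ} (P : Matrix (Fin m) (Fin m) ℝ) (pi : Fin m → ℝ) : Prop :=
  (∀ j, 0 ≤ pi j) ∧ (∑ j, pi j = 1) ∧ ∀ j, ∑ i, pi i * P i j = pi j

/-!
Cayley–Hamilton and Lagrange interpolation at the distinct eigenvalues give Sylvester's formula
`P ^ n = ∑ₖ λₖ ^ n • Lₖ(P)`, where `Lₖ` is the Lagrange basis polynomial of `λₖ`. Since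
`P L₁(P) = L₁(P)`, the columns of `L₁(P)` lie in the `1`-eigenspace, which is the line through the
all-ones vector because `1` is a simple root of the characteristic polynomial; multiplying by `π`
on the left then shows that every row of `L₁(P)` is `π`. For the other terms use the operator norm
for the sup norm (maximal absolute row sum), in which `‖P‖ = 1`: then
`‖Lₖ(P)‖ ≤ ∏_{t ≠ k} (1 + |λₜ|) / |λₖ - λₜ|`, and `|λₖ| ^ n ≤ ρ ^ n ≤ ρ ^ (n - 1)` because the
spectral radius is at most `‖P‖`.
-/

open Lagrange Matrix

attribute [local instance] Matrix.linftyOpNormedAddCommGroup Matrix.linftyOpNormedRing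
  Matrix.linftyOpNormedAlgebra

section Sylvester

variable {F A ι : Type*} [Field F] [Ring A] [Algebra F A] [DecidableEq ι]
  {s : Finset ι} {v : ι → F} {a : A}

theorem aeval_eq_sum_eval_smul_aeval_basis (ha : aeval a (nodal s v) = 0)
    (hvs : Set.InjOn v s) (q : F[X]) :
    aeval a q = ∑ i ∈ s, q.eval (v i) • aeval a (Lagrange.basis s v i) := by
  have hdiv := modByMonic_add_div q (nodal s v)
  have hmod : q %ₘ nodal s v = interpolate s v fun i => q.eval (v i) := by
    refine eq_interpolate_of_eval_eq _ hvs ?_ fun i hi => ?_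
    · exact degree_nodal (s := s) (v := v) ▸ degree_modByMonic_lt _ nodal_monic
    · conv_rhs => rw [← hdiv]
      simp [eval_nodal_at_node hi]
  conv_lhs =>
    rw [← hdiv, map_add, map_mul, ha, zero_mul, add_zero, hmod, interpolate_apply, map_sum]
  simp only [map_mul, aeval_C, Algebra.smul_def]

theorem mul_aeval_basis_eq_smul (ha : aeval a (nodal s v) = 0) (hvs : Set.InjOn v s) {i : ι}
    (hi : i ∈ s) : a * aeval a (Lagrange.basis s v i) = v i • aeval a (Lagrange.basis s v i) := by
  have := aeval_eq_sum_eval_smul_aeval_basis ha hvs (X * Lagrange.basis s v i)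
  rw [map_mul, aeval_X] at this
  rw [this, Finset.sum_eq_single_of_mem i hi fun j hj hji => ?_]
  · simp [eval_basis_self hvs hi]
  · simp [eval_basis_of_ne hji.symm hj]

end Sylvester

section NormBound

variable {𝕜 A ι : Type*} [NormedField 𝕜] [NormedRing A] [NormedAlgebra 𝕜 A] [NormOneClass A]
  [DecidableEq ι]

theorem norm_aeval_basisDivisor_le (a : A) (x y : 𝕜) :
    ‖aeval a (basisDivisor x y)‖ ≤ (‖a‖ + ‖y‖) / ‖x - y‖ := by
  rw [basisDivisor, map_mul, aeval_C, map_sub, aeval_X, aeval_C, ← Algebra.smul_def, norm_smul,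
    norm_inv, inv_mul_eq_div]
  gcongr
  exact (norm_sub_le _ _).trans_eq (by rw [norm_algebraMap'])

theorem norm_aeval_basis_le (a : A) (s : Finset ι) (v : ι → 𝕜) (i : ι) :
    ‖aeval a (Lagrange.basis s v i)‖ ≤ ∏ j ∈ s.erase i, (‖a‖ + ‖v j‖) / ‖v i - v j‖ := by
  have hsub := Finset.le_prod_of_submultiplicative (fun p : 𝕜[X] => ‖aeval a p‖₊)
    (by simp) (fun p q => by simpa using nnnorm_mul_le _ _) (s.erase i)
    (fun j => basisDivisor (v i) (v j))
  refine (NNReal.coe_le_coe.mpr hsub).trans ?_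
  push_cast
  exact Finset.prod_le_prod (fun _ _ => norm_nonneg _) fun j _ => norm_aeval_basisDivisor_le a _ _

end NormBound

theorem Matrix.norm_entry_le_linfty_opNorm {m n α : Type*} [Fintype m] [Fintype n]
    [NormedAddCommGroup α] (A : Matrix m n α) (i : m) (j : n) : ‖A i j‖ ≤ ‖A‖ := by
  rw [Matrix.linfty_opNorm_def, ← coe_nnnorm, NNReal.coe_le_coe]
  exact (Finset.single_le_sum (fun _ _ => zero_le) (Finset.mem_univ j)).trans
    (Finset.le_sup (f := fun i => ∑ j, ‖A i j‖₊) (Finset.mem_univ i))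

theorem Matrix.vecMul_aeval_eq_eval_smul {n R : Type*} [Fintype n] [DecidableEq n] [CommRing R]
    {A : Matrix n n R} {x : n → R} {μ : R} (h : x ᵥ* A = μ • x) (q : R[X]) :
    x ᵥ* aeval A q = q.eval μ • x := by
  have hpow : ∀ k : ℕ, x ᵥ* A ^ k = μ ^ k • x := by
    intro k
    induction k with
    | zero => simp
    | succ k ih =>
      rw [pow_succ, ← vecMul_vecMul, ih, smul_vecMul, h, smul_smul, pow_succ]
  induction q using Polynomial.induction_on' with
  | add p q hp hq => simp [Matrix.vecMul_add, hp, hq, add_smul]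
  | monomial k c => simp [aeval_monomial, ← Algebra.smul_def, vecMul_smul, hpow, smul_smul]

theorem Matrix.exists_eq_smul_of_rootMultiplicity_le_one {n K : Type*} [Fintype n]
    [DecidableEq n] [Field K] {A : Matrix n n K} {μ : K}
    (hμ : A.charpoly.rootMultiplicity μ ≤ 1) {x y : n → K}
    (hx : x ≠ 0) (hAx : A *ᵥ x = μ • x) (hAy : A *ᵥ y = μ • y) : ∃ c : K, y = c • x := by
  set E := Module.End.eigenspace (Matrix.toLin' A) μ
  have hxE : x ∈ E := Module.End.mem_eigenspace_iff.mpr (by simpa using hAx)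
  have hyE : y ∈ E := Module.End.mem_eigenspace_iff.mpr (by simpa using hAy)
  have hE : Module.finrank K E = 1 := by
    refine le_antisymm ((LinearMap.finrank_eigenspace_le _ μ).trans (charpoly_toLin' A ▸ hμ)) ?_
    exact Submodule.one_le_finrank_iff.mpr ((Submodule.ne_bot_iff E).mpr ⟨x, hxE, hx⟩)
  obtain ⟨c, hc⟩ :=
    exists_smul_eq_of_finrank_eq_one hE (x := ⟨x, hxE⟩) (by simpa using hx) ⟨y, hyE⟩
  exact ⟨c, congrArg Subtype.val hc.symm⟩

theorem Matrix.aeval_nodal_eq_zero {n R : Type*} [Fintype n] [DecidableEq n] [CommRing R]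
    {A : Matrix n n R} {v : n → R} (h : A.charpoly = ∏ k, (X - C (v k))) :
    aeval A (nodal univ v) = 0 := by
  rw [nodal_eq, ← h, Matrix.aeval_self_charpoly]

section RowStochastic

variable {m : ℕ} {P : Matrix (Fin m) (Fin m) ℝ}

theorem IsRowStochastic.map_ofReal_mulVec_one (hP : IsRowStochastic P) :
    P.map ((↑) : ℝ → ℂ) *ᵥ 1 = 1 := by
  ext i
  simp [Matrix.mulVec, dotProduct, ← Complex.ofReal_sum, hP.2 i]

theorem IsRowStochastic.norm_map_ofReal_le_one (hP : IsRowStochastic P) :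
    ‖P.map ((↑) : ℝ → ℂ)‖ ≤ 1 := by
  rw [Matrix.linfty_opNorm_def, ← NNReal.coe_one, NNReal.coe_le_coe]
  refine Finset.sup_le fun i _ => ?_
  rw [← NNReal.coe_le_coe]
  push_cast
  simp [Complex.norm_real, abs_of_nonneg (hP.1 i _), hP.2 i]

theorem IsRowStochastic.norm_le_one_of_isRoot_charpoly (hP : IsRowStochastic P) {μ : ℂ}
    (hμ : (P.map ((↑) : ℝ → ℂ)).charpoly.IsRoot μ) : ‖μ‖ ≤ 1 := by
  have hspec := Matrix.mem_spectrum_iff_isRoot_charpoly.mpr hμ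
  cases isEmpty_or_nonempty (Fin m)
  · simp [spectrum.of_subsingleton] at hspec
  · exact (spectrum.norm_le_norm_of_mem hspec).trans hP.norm_map_ofReal_le_one

theorem IsStationaryDistMC.vecMul_map_ofReal {pi : Fin m → ℝ} (hpi : IsStationaryDistMC P pi) :
    (fun j => (pi j : ℂ)) ᵥ* P.map ((↑) : ℝ → ℂ) = fun j => (pi j : ℂ) := by
  ext j
  simp [Matrix.vecMul, dotProduct, ← Complex.ofReal_mul, ← Complex.ofReal_sum, hpi.2.2 j]

end RowStochastic

section SpectralProjection

variable {m : ℕ} {P : Matrix (Fin m) (Fin m) ℝ} {pi : Fin m → ℝ} {lam : Fin m → ℂ}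

theorem IsStationaryDistMC.aeval_basis_eq_of_eq_one (hP : IsRowStochastic P)
    (hpi : IsStationaryDistMC P pi)
    (hchar : (P.map ((↑) : ℝ → ℂ)).charpoly = ∏ k : Fin m, (X - C (lam k)))
    (hinj : Function.Injective lam) {z : Fin m} (hz : lam z = 1) :
    aeval (P.map ((↑) : ℝ → ℂ)) (Lagrange.basis univ lam z) = of fun _ j => (pi j : ℂ) := by
  set A := P.map ((↑) : ℝ → ℂ)
  set Q := aeval A (Lagrange.basis univ lam z)
  have : Nonempty (Fin m) := ⟨z⟩
  have hAQ : A * Q = Q := by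
    simpa [hz] using
      mul_aeval_basis_eq_smul (aeval_nodal_eq_zero hchar) hinj.injOn (mem_univ z)
  have hsimple : A.charpoly.rootMultiplicity 1 ≤ 1 :=
    rootMultiplicity_le_one_of_separable (hchar ▸ separable_prod_X_sub_C_iff.mpr hinj) 1
  have hcol : ∀ j, ∃ c : ℂ, Q.col j = c • 1 := fun j =>
    exists_eq_smul_of_rootMultiplicity_le_one hsimple one_ne_zero
      (by simpa using hP.map_ofReal_mulVec_one)
      (by rw [← mulVec_single_one, mulVec_mulVec, hAQ, one_smul])
  choose c hc using hcol
  have hQ : ∀ i j, Q i j = c j := fun i j => by simpa using congrFun (hc j) i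
  have hpiQ : (fun j => (pi j : ℂ)) ᵥ* Q = fun j => (pi j : ℂ) := by
    have := Matrix.vecMul_aeval_eq_eval_smul (μ := 1)
      (by rw [one_smul]; exact hpi.vecMul_map_ofReal) (Lagrange.basis univ lam z)
    rwa [← hz, eval_basis_self hinj.injOn (mem_univ z), one_smul] at this
  ext i j
  rw [hQ, of_apply, ← congrFun hpiQ j]
  simp [vecMul, dotProduct, hQ, ← Finset.sum_mul, ← Complex.ofReal_sum, hpi.2.1]

theorem IsStationaryDistMC.pow_apply_sub_eq_sum (hP : IsRowStochastic P)
    (hpi : IsStationaryDistMC P pi)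
    (hchar : (P.map ((↑) : ℝ → ℂ)).charpoly = ∏ k : Fin m, (X - C (lam k)))
    (hinj : Function.Injective lam) {z : Fin m} (hz : lam z = 1) (n : ℕ) (i j : Fin m) :
    ((P ^ n) i j - pi j : ℂ) =
      ∑ k ∈ univ.erase z,
        lam k ^ n * aeval (P.map ((↑) : ℝ → ℂ)) (Lagrange.basis univ lam k) i j := by
  have hdecomp := congrFun₂
    (aeval_eq_sum_eval_smul_aeval_basis (aeval_nodal_eq_zero hchar) hinj.injOn (X ^ n)) i j
  rw [← add_sum_erase _ _ (mem_univ z), hpi.aeval_basis_eq_of_eq_one hP hchar hinj hz] at hdecomp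
  simp only [map_pow, aeval_X, eval_pow, eval_X, hz, one_pow, one_smul] at hdecomp
  have hpow : ((P ^ n) i j : ℂ) = (P.map ((↑) : ℝ → ℂ) ^ n) i j :=
    congrFun₂ (Matrix.map_pow P Complex.ofRealHom n) i j
  simp [hpow, hdecomp, Matrix.sum_apply]

theorem IsRowStochastic.norm_aeval_basis_apply_le (hP : IsRowStochastic P) (lam : Fin m → ℂ)
    (k i j : Fin m) :
    ‖aeval (P.map ((↑) : ℝ → ℂ)) (Lagrange.basis univ lam k) i j‖ ≤
      ∏ t ∈ univ.erase k, (1 + ‖lam t‖) / ‖lam k - lam t‖ := by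
  have : Nonempty (Fin m) := ⟨k⟩
  refine (norm_entry_le_linfty_opNorm _ i j).trans <| (norm_aeval_basis_le _ _ _ _).trans <|
    prod_le_prod (fun _ _ => by positivity) fun t _ => ?_
  gcongr
  exact hP.norm_map_ofReal_le_one

end SpectralProjection

theorem stmt_6_general {m : ℕ} (hm : 0 < m) (P : Matrix (Fin m) (Fin m) ℝ)
    (hP : IsRowStochastic P)
    (pi : Fin m → ℝ) (hpi : IsStationaryDistMC P pi)
    (lam : Fin m → ℂ)
    (hchar : (P.map ((↑) : ℝ → ℂ)).charpoly = ∏ k : Fin m, (X - C (lam k)))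
    (hinj : Function.Injective lam)
    (h1 : lam ⟨0, hm⟩ = 1)
    (ρ : ℝ)
    (hρ : IsGreatest {r : ℝ | ∃ k : Fin m, k ≠ ⟨0, hm⟩ ∧ ‖lam k‖ = r} ρ) :
    ∀ i j : Fin m, ∀ n : ℕ, 1 ≤ n →
      |(P ^ n) i j - pi j| ≤
        (∑ k ∈ Finset.univ.erase (⟨0, hm⟩ : Fin m),
          ∏ t ∈ Finset.univ.erase k,
            (1 + ‖lam t‖) / ‖lam k - lam t‖) * ρ ^ (n - 1) := by
  intro i j n _
  obtain ⟨⟨k₀, -, rfl⟩, hρ⟩ := hρ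
  have hρ_le_one : ‖lam k₀‖ ≤ 1 := hP.norm_le_one_of_isRoot_charpoly <| by
    simp [hchar, eval_prod, Finset.prod_eq_zero_iff, sub_eq_zero]
  have hpow : ∀ k ∈ univ.erase (⟨0, hm⟩ : Fin m), ‖lam k‖ ^ n ≤ ‖lam k₀‖ ^ (n - 1) := fun k hk =>
    (pow_le_pow_left₀ (norm_nonneg _) (hρ ⟨k, (mem_erase.mp hk).1, rfl⟩) n).trans
      (pow_le_pow_of_le_one (norm_nonneg _) hρ_le_one (Nat.sub_le n 1))
  calc |(P ^ n) i j - pi j| = ‖((P ^ n) i j - pi j : ℂ)‖ := by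
        rw [← Complex.ofReal_sub, Complex.norm_real, Real.norm_eq_abs]
    _ = ‖∑ k ∈ univ.erase ⟨0, hm⟩,
          lam k ^ n * aeval (P.map ((↑) : ℝ → ℂ)) (Lagrange.basis univ lam k) i j‖ := by
        rw [hpi.pow_apply_sub_eq_sum hP hchar hinj h1]
    _ ≤ ∑ k ∈ univ.erase ⟨0, hm⟩,
          (∏ t ∈ univ.erase k, (1 + ‖lam t‖) / ‖lam k - lam t‖) * ‖lam k₀‖ ^ (n - 1) := by
        refine norm_sum_le_of_le _ fun k hk => ?_
        rw [norm_mul, norm_pow, mul_comm]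
        exact mul_le_mul (hP.norm_aeval_basis_apply_le lam k i j) (hpow k hk) (by positivity)
          (by positivity)
    _ = _ := (Finset.sum_mul _ _ _).symm

/-- Convergence theorem for Markov chains with the simplified spectral constant `Ψ`. -/
theorem stmt_6 {m : ℕ} (hm : 0 < m) (P : Matrix (Fin m) (Fin m) ℝ)
    (hP : IsRowStochastic P) (hirr : IsIrreducibleMC P) (hap : IsAperiodicMC P)
    (pi : Fin m → ℝ) (hpi : IsStationaryDistMC P pi)
    (lam : Fin m → ℂ)
    (hchar : (P.map ((↑) : ℝ → ℂ)).charpoly = ∏ k : Fin m, (X - C (lam k)))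
    (hinj : Function.Injective lam) (hnz : ∀ k, lam k ≠ 0)
    (h1 : lam ⟨0, hm⟩ = 1)
    (ρ : ℝ)
    (hρ : IsGreatest {r : ℝ | ∃ k : Fin m, k ≠ ⟨0, hm⟩ ∧ ‖lam k‖ = r} ρ) :
    ∀ i j : Fin m, ∀ n : ℕ, 1 ≤ n →
      |(P ^ n) i j - pi j| ≤
        (∑ k ∈ Finset.univ.erase (⟨0, hm⟩ : Fin m),
          ∏ t ∈ Finset.univ.erase k,
            (1 + ‖lam t‖) / ‖lam k - lam t‖) * ρ ^ (n - 1) :=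
  stmt_6_general hm P hP pi hpi lam hchar hinj h1 ρ hρ
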